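/- arXiv:1912.13383 — 4 statements merged into one kernel-verified Lean document; each statement's English description precedes it below -/
import Mathlib

section
/- Let x and y be two n-dimensional probability vectors with entries arranged in non-increasing order. Then there exists a unique probability vector z with entries in non-increasing order such that: (i) x ≺ z and y ≺ z (z majorizes both x and y), and (ii) for every probability vector w with non-increasing entries satisfying x ≺ w and y ≺ w, one has z ≺ w. That is, any two elements of the majorization lattice of probability vectors have a unique least upper bound. -/
open scoped BigOperators

/-- Sum of the `k` largest entries of `x`: the maximum of `∑ i ∈ s, x i`
over all `k`-element index sets `s`. -/
noncomputable def kMaxSum {ι : Type*} [Fintype ι] (x : ι → ℝ) (k : ℕ) : ℝ :=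
  sSup {t : ℝ | ∃ s : Finset ι, s.card = k ∧ t = ∑ i ∈ s, x i}

/-- `x ≺ y`: for every `k`, the sum of the `k` largest entries of `x` is at most
the sum of the `k` largest entries of `y`. -/
def Majorized {ι κ : Type*} [Fintype ι] [Fintype κ] (x : ι → ℝ) (y : κ → ℝ) : Prop :=
  ∀ k : ℕ, kMaxSum x k ≤ kMaxSum y k

namespace ULMaux

variable {n : ℕ}

/-- Extension of a vector on `Fin n` to `ℕ` by zero. -/
noncomputable def pext (w : Fin n → ℝ) (i : ℕ) : ℝ := if h : i < n then w ⟨i, h⟩ else 0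

/-- Prefix sums. -/
noncomputable def psum (w : Fin n → ℝ) (k : ℕ) : ℝ := ∑ i ∈ Finset.range k, pext w i

lemma pext_nonneg {w : Fin n → ℝ} (h0 : ∀ i, 0 ≤ w i) (i : ℕ) : 0 ≤ pext w i := by
  unfold pext; split <;> simp [h0]

lemma pext_anti {w : Fin n → ℝ} (h0 : ∀ i, 0 ≤ w i) (ha : Antitone w) (k : ℕ) :
    pext w (k + 1) ≤ pext w k := by
  unfold pext
  split
  · rename_i h1
    rw [dif_pos (Nat.lt_of_succ_lt h1)]
    exact ha (by simp [Fin.le_def])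
  · split
    · exact h0 _
    · exact le_rfl

lemma psum_zero (w : Fin n → ℝ) : psum w 0 = 0 := by simp [psum]

lemma psum_succ (w : Fin n → ℝ) (k : ℕ) : psum w (k + 1) = psum w k + pext w k :=
  Finset.sum_range_succ _ _

lemma psum_mono {w : Fin n → ℝ} (h0 : ∀ i, 0 ≤ w i) : Monotone (psum w) := by
  apply monotone_nat_of_le_succ
  intro k
  rw [psum_succ]
  have := pext_nonneg h0 k
  linarith

lemma psum_nonneg {w : Fin n → ℝ} (h0 : ∀ i, 0 ≤ w i) (k : ℕ) : 0 ≤ psum w k :=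
  Finset.sum_nonneg fun i _ => pext_nonneg h0 i

lemma psum_total (w : Fin n → ℝ) : psum w n = ∑ i, w i := by
  rw [psum, ← Fin.sum_univ_eq_sum_range]
  exact Finset.sum_congr rfl fun i _ => by simp [pext, Fin.is_lt]

lemma psum_of_ge (w : Fin n → ℝ) {k : ℕ} (h : n ≤ k) : psum w k = ∑ i, w i := by
  induction k with
  | zero =>
    have : n = 0 := Nat.le_zero.mp h
    subst this; simp [psum_zero, (psum_total w).symm]
  | succ k ih =>
    rcases Nat.lt_or_ge n (k+1) with h1 | h1
    · have hnk : n ≤ k := Nat.lt_succ_iff.mp h1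
      rw [psum_succ, ih hnk]
      have : pext w k = 0 := by unfold pext; rw [dif_neg (by omega)]
      rw [this, add_zero]
    · have : n = k + 1 := le_antisymm h h1
      subst this; exact psum_total w

lemma psum_concave {w : Fin n → ℝ} (h0 : ∀ i, 0 ≤ w i) (ha : Antitone w) (k : ℕ) :
    psum w (k + 2) + psum w k ≤ 2 * psum w (k + 1) := by
  have h1 := psum_succ w (k+1)
  have h2 := psum_succ w k
  have h3 := pext_anti h0 ha k
  linarith

lemma kMaxSum_eq {w : Fin n → ℝ} (ha : Antitone w) {k : ℕ} (hk : k ≤ n) :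
    kMaxSum w k = psum w k := by
  have hub : ∀ t ∈ {t : ℝ | ∃ s : Finset (Fin n), s.card = k ∧ t = ∑ i ∈ s, w i},
      t ≤ psum w k := by
    rintro t ⟨s, hs, rfl⟩
    set f := s.orderEmbOfFin hs with hf
    have hseq : s = Finset.univ.map ⟨f, f.injective⟩ := by
      ext a
      simp only [Finset.mem_map, Finset.mem_univ, true_and, Function.Embedding.coeFn_mk]
      constructor
      · intro hmem
        have : a ∈ Set.range f := by rw [Finset.range_orderEmbOfFin]; exact hmem
        exact this
      · rintro ⟨j, rfl⟩
        have : f j ∈ Set.range f := ⟨j, rfl⟩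
        rw [Finset.range_orderEmbOfFin] at this; exact this
    rw [hseq, Finset.sum_map]
    have hle : ∀ m : ℕ, ∀ hm : m < k, m ≤ (f ⟨m, hm⟩ : ℕ) := by
      intro m
      induction m with
      | zero => intro _; exact Nat.zero_le _
      | succ m ih =>
        intro hm
        have hm' : m < k := Nat.lt_of_succ_lt hm
        have h1 : (f ⟨m, hm'⟩ : ℕ) < (f ⟨m + 1, hm⟩ : ℕ) :=
          f.strictMono (by simp [Fin.lt_def])
        have h2 := ih hm'
        omega
    have : ∀ j : Fin k, w (f j) ≤ pext w (j : ℕ) := by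
      intro j
      have hjn : (j : ℕ) < n := lt_of_lt_of_le j.is_lt hk
      rw [pext, dif_pos hjn]
      exact ha (by rw [Fin.le_def]; simpa using hle (j : ℕ) j.is_lt)
    calc ∑ j : Fin k, w (f j) ≤ ∑ j : Fin k, pext w (j : ℕ) := Finset.sum_le_sum fun j _ => this j
      _ = psum w k := (Fin.sum_univ_eq_sum_range (pext w) k)
  have hmem : psum w k ∈ {t : ℝ | ∃ s : Finset (Fin n), s.card = k ∧ t = ∑ i ∈ s, w i} := by
    refine ⟨Finset.map (Fin.castLEEmb hk) Finset.univ, ?_, ?_⟩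
    · rw [Finset.card_map, Finset.card_univ, Fintype.card_fin]
    · rw [Finset.sum_map, psum, ← Fin.sum_univ_eq_sum_range (pext w) k]
      refine Finset.sum_congr rfl fun j _ => ?_
      rw [pext, dif_pos (lt_of_lt_of_le j.is_lt hk)]
      rfl
  exact le_antisymm (csSup_le ⟨_, hmem⟩ hub) (le_csSup ⟨_, hub⟩ hmem)

lemma kMaxSum_of_gt (w : Fin n → ℝ) {k : ℕ} (h : n < k) : kMaxSum w k = 0 := by
  have : {t : ℝ | ∃ s : Finset (Fin n), s.card = k ∧ t = ∑ i ∈ s, w i} = ∅ := by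
    ext t
    simp only [Set.mem_setOf_eq, Set.mem_empty_iff_false, iff_false, not_exists]
    rintro s ⟨hs, -⟩
    have := Finset.card_le_univ s
    simp only [Finset.card_univ, Fintype.card_fin] at this
    omega
  rw [kMaxSum, this, Real.sSup_empty]

lemma majorized_iff {x z : Fin n → ℝ} (hax : Antitone x) (haz : Antitone z) :
    Majorized x z ↔ ∀ k ≤ n, psum x k ≤ psum z k := by
  constructor
  · intro h k hk
    have := h k
    rwa [kMaxSum_eq hax hk, kMaxSum_eq haz hk] at this
  · intro h k
    rcases le_or_gt k n with hk | hk
    · rw [kMaxSum_eq hax hk, kMaxSum_eq haz hk]; exact h k hk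
    · rw [kMaxSum_of_gt x hk, kMaxSum_of_gt z hk]

/-- The upper-bound predicate. -/
def Ub (x y w : Fin n → ℝ) : Prop :=
  (∀ i, 0 ≤ w i) ∧ (∑ i, w i = 1) ∧ Antitone w ∧ Majorized x w ∧ Majorized y w

/-- The infimum of prefix sums of upper bounds. -/
noncomputable def Zf (x y : Fin n → ℝ) (k : ℕ) : ℝ :=
  sInf {t : ℝ | ∃ w, Ub x y w ∧ t = psum w k}

lemma Zf_bddBelow (x y : Fin n → ℝ) (k : ℕ) :
    BddBelow {t : ℝ | ∃ w, Ub x y w ∧ t = psum w k} :=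
  ⟨0, by rintro t ⟨w, hw, rfl⟩; exact psum_nonneg hw.1 k⟩

lemma Zf_le {x y w : Fin n → ℝ} (hw : Ub x y w) (k : ℕ) : Zf x y k ≤ psum w k :=
  csInf_le (Zf_bddBelow x y k) ⟨w, hw, rfl⟩

lemma le_Zf {x y : Fin n → ℝ} (hne : ∃ w, Ub x y w) {c : ℝ} {k : ℕ}
    (h : ∀ w, Ub x y w → c ≤ psum w k) : c ≤ Zf x y k := by
  obtain ⟨w0, hw0⟩ := hne
  exact le_csInf ⟨_, w0, hw0, rfl⟩ (by rintro t ⟨w, hw, rfl⟩; exact h w hw)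

lemma Zf_zero {x y : Fin n → ℝ} (hne : ∃ w, Ub x y w) : Zf x y 0 = 0 := by
  obtain ⟨w0, hw0⟩ := hne
  refine le_antisymm ?_ (le_Zf ⟨w0, hw0⟩ fun w hw => le_of_eq (psum_zero w).symm)
  have := Zf_le hw0 0
  rwa [psum_zero] at this

lemma Zf_of_ge {x y : Fin n → ℝ} (hne : ∃ w, Ub x y w) {k : ℕ} (hk : n ≤ k) :
    Zf x y k = 1 := by
  obtain ⟨w0, hw0⟩ := hne
  refine le_antisymm ?_ (le_Zf ⟨w0, hw0⟩ fun w hw => le_of_eq ?_)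
  · have := Zf_le hw0 k
    rwa [psum_of_ge w0 hk, hw0.2.1] at this
  · rw [psum_of_ge w hk, hw.2.1]

lemma Zf_mono {x y : Fin n → ℝ} (hne : ∃ w, Ub x y w) : Monotone (Zf x y) := by
  intro k l hkl
  exact le_Zf hne fun w hw => (Zf_le hw k).trans (psum_mono hw.1 hkl)

lemma Zf_concave {x y : Fin n → ℝ} (hne : ∃ w, Ub x y w) (k : ℕ) :
    Zf x y (k + 2) + Zf x y k ≤ 2 * Zf x y (k + 1) := by
  have h : (Zf x y (k + 2) + Zf x y k) / 2 ≤ Zf x y (k + 1) := by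
    apply le_Zf hne
    intro w hw
    have h1 := psum_concave hw.1 hw.2.2.1 k
    have h2 := Zf_le hw (k + 2)
    have h3 := Zf_le hw k
    linarith
  linarith

end ULMaux

open ULMaux in
/-- Any two elements of the majorization lattice of (non-increasingly ordered)
probability vectors have a unique least upper bound. -/
theorem unique_lub_majorization {n : ℕ} (x y : Fin n → ℝ)
    (hx0 : ∀ i, 0 ≤ x i) (hx1 : ∑ i, x i = 1) (hxa : Antitone x)
    (hy0 : ∀ i, 0 ≤ y i) (hy1 : ∑ i, y i = 1) (hya : Antitone y) :
    ∃! z : Fin n → ℝ,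
      ((∀ i, 0 ≤ z i) ∧ (∑ i, z i = 1) ∧ Antitone z) ∧
      Majorized x z ∧ Majorized y z ∧
      ∀ w : Fin n → ℝ, (∀ i, 0 ≤ w i) → (∑ i, w i = 1) → Antitone w →
        Majorized x w → Majorized y w → Majorized z w := by
  -- `n ≠ 0`
  rcases Nat.eq_zero_or_pos n with rfl | hn
  · simp at hx1
  -- the top element `e` shows the set of upper bounds is nonempty
  have hzero : (0 : ℕ) < n := hn
  set i0 : Fin n := ⟨0, hn⟩ with hi0
  set e : Fin n → ℝ := fun i => if i = i0 then 1 else 0 with he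
  have he0 : ∀ i, 0 ≤ e i := by intro i; simp only [he]; split <;> norm_num
  have he1 : ∑ i, e i = 1 := by simp [he]
  have hea : Antitone e := by
    intro i j hij
    by_cases hj : j = i0
    · have hi : i = i0 := by
        have : i ≤ i0 := hj ▸ hij
        exact le_antisymm this (by simp [hi0, Fin.le_def])
      simp [he, hi, hj]
    · simp only [he, if_neg hj]
      split <;> norm_num
  have hpse : ∀ k, 1 ≤ k → k ≤ n → (1 : ℝ) ≤ psum e k := by
    intro k h1 hkn
    have : psum e 1 ≤ psum e k := psum_mono he0 h1
    have he01 : psum e 1 = 1 := by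
      rw [psum_succ, psum_zero]
      simp [pext, hn, he, hi0]
    linarith
  have hmaj_e : ∀ v : Fin n → ℝ, (∀ i, 0 ≤ v i) → (∑ i, v i = 1) → Antitone v →
      Majorized v e := by
    intro v hv0 hv1 hva
    rw [majorized_iff hva hea]
    intro k hk
    rcases Nat.eq_zero_or_pos k with rfl | hk1
    · simp [psum_zero]
    · have hv : psum v k ≤ 1 := by
        have := psum_mono hv0 hk
        rwa [psum_total, hv1] at this
      exact hv.trans (hpse k hk1 hk)
  have hUbe : Ub x y e := ⟨he0, he1, hea, hmaj_e x hx0 hx1 hxa, hmaj_e y hy0 hy1 hya⟩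
  have hne : ∃ w, Ub x y w := ⟨e, hUbe⟩
  -- the candidate
  set z : Fin n → ℝ := fun i => Zf x y ((i : ℕ) + 1) - Zf x y (i : ℕ) with hz
  have hz0 : ∀ i, 0 ≤ z i := by
    intro i
    simp only [hz, sub_nonneg]
    exact Zf_mono hne (Nat.le_succ _)
  have hinc : Antitone (fun k : ℕ => Zf x y (k + 1) - Zf x y k) := by
    apply antitone_nat_of_succ_le
    intro k
    have := Zf_concave hne k
    show Zf x y (k + 1 + 1) - Zf x y (k + 1) ≤ Zf x y (k + 1) - Zf x y k
    linarith
  have hza : Antitone z := by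
    intro i j hij
    exact hinc (show (i : ℕ) ≤ (j : ℕ) from hij)
  have hpz : ∀ k, k ≤ n → psum z k = Zf x y k := by
    intro k
    induction k with
    | zero => intro _; rw [psum_zero, Zf_zero hne]
    | succ k ih =>
      intro hk
      have hkn : k < n := hk
      rw [psum_succ, ih (le_of_lt hkn)]
      have : pext z k = z ⟨k, hkn⟩ := by rw [pext, dif_pos hkn]
      rw [this]
      simp only [hz]
      ring
  have hz1 : ∑ i, z i = 1 := by
    rw [← psum_total, hpz n le_rfl, Zf_of_ge hne le_rfl]
  have hmaj : ∀ v : Fin n → ℝ, Antitone v → (∀ w, Ub x y w → Majorized v w) →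
      Majorized v z := by
    intro v hva h
    rw [majorized_iff hva hza]
    intro k hk
    rw [hpz k hk]
    exact le_Zf hne fun w hw => ((majorized_iff hva hw.2.2.1).mp (h w hw)) k hk
  have hxz : Majorized x z := hmaj x hxa fun w hw => hw.2.2.2.1
  have hyz : Majorized y z := hmaj y hya fun w hw => hw.2.2.2.2
  have hmin : ∀ w : Fin n → ℝ, Ub x y w → Majorized z w := by
    intro w hw
    rw [majorized_iff hza hw.2.2.1]
    intro k hk
    rw [hpz k hk]
    exact Zf_le hw k
  refine ⟨z, ⟨⟨hz0, hz1, hza⟩, hxz, hyz, fun w hw0 hw1 hwa hxw hyw =>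
    hmin w ⟨hw0, hw1, hwa, hxw, hyw⟩⟩, ?_⟩
  -- uniqueness
  rintro z' ⟨⟨hz0', hz1', hza'⟩, hxz', hyz', hmin'⟩
  have hUbz : Ub x y z := ⟨hz0, hz1, hza, hxz, hyz⟩
  have hUbz' : Ub x y z' := ⟨hz0', hz1', hza', hxz', hyz'⟩
  have h1 : Majorized z z' := hmin z' hUbz'
  have h2 : Majorized z' z := hmin' z hz0 hz1 hza hxz hyz
  have hps : ∀ k, k ≤ n → psum z' k = psum z k := by
    intro k hk
    exact le_antisymm ((majorized_iff hza' hza).mp h2 k hk)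
      ((majorized_iff hza hza').mp h1 k hk)
  funext i
  have hi : (i : ℕ) < n := i.is_lt
  have key : ∀ v : Fin n → ℝ, v i = psum v ((i : ℕ) + 1) - psum v (i : ℕ) := by
    intro v
    rw [psum_succ, pext, dif_pos hi, Fin.eta]
    ring
  rw [key z', key z, hps _ hi, hps _ (le_of_lt hi)]
end

section
/- Fix a constant c > 0 and let P^n_c denote the set of vectors in R^n with nonnegative entries arranged in non-increasing order whose entries sum to c. Then for any x, y ∈ P^n_c there exists a unique z ∈ P^n_c such that: (i) x ≺ z and y ≺ z, and (ii) for every w ∈ P^n_c with x ≺ w and y ≺ w, one has z ≺ w. In other words, any two elements of P^n_c have a unique least upper bound with respect to majorization. -/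
open scoped BigOperators

/-! For non-increasing vectors, `x ≺ w` says exactly that the partial-sum sequence of `x` lies
below that of `w`, and the partial-sum sequences of non-increasing vectors are exactly the
discretely concave sequences. Hence the least upper bound of `x` and `y` is the vector whose
partial sums form the least concave majorant of `k ↦ max (S_x k) (S_y k)` on `{0, …, n}`: it
starts at `0`, ends at `c` and never exceeds `c`, so its increments are nonnegative and
non-increasing. Uniqueness is the antisymmetry of `≺` on non-increasing vectors. -/

open Finset

noncomputable def partialSum {n : ℕ} (x : Fin n → ℝ) (k : ℕ) : ℝ :=
  ∑ j ∈ range k, if h : j < n then x ⟨j, h⟩ else 0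

section PartialSum

variable {n : ℕ}

@[simp] lemma partialSum_zero (x : Fin n → ℝ) : partialSum x 0 = 0 := by simp [partialSum]

lemma partialSum_succ (x : Fin n → ℝ) {k : ℕ} (hk : k < n) :
    partialSum x (k + 1) = partialSum x k + x ⟨k, hk⟩ := by
  simp [partialSum, sum_range_succ, hk]

lemma partialSum_eq_sum_castLE (x : Fin n → ℝ) {k : ℕ} (hk : k ≤ n) :
    partialSum x k = ∑ j : Fin k, x (Fin.castLE hk j) := by
  rw [partialSum, ← Fin.sum_univ_eq_sum_range (fun j ↦ if h : j < n then x ⟨j, h⟩ else 0)]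
  exact sum_congr rfl fun j _ ↦ dif_pos (j.2.trans_le hk)

lemma partialSum_self (x : Fin n → ℝ) : partialSum x n = ∑ i, x i := by
  simp [partialSum_eq_sum_castLE x le_rfl]

lemma partialSum_le_sum {x : Fin n → ℝ} (hx : ∀ i, 0 ≤ x i) {k : ℕ} (hk : k ≤ n) :
    partialSum x k ≤ ∑ i, x i := by
  rw [← partialSum_self]
  refine sum_le_sum_of_subset_of_nonneg (range_subset_range.mpr hk) fun j _ _ ↦ ?_
  split_ifs
  exacts [hx _, le_rfl]

lemma eq_of_partialSum_eq {x y : Fin n → ℝ} (h : ∀ k ≤ n, partialSum x k = partialSum y k) :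
    x = y := by
  funext ⟨i, hi⟩
  have := h (i + 1) hi
  rw [partialSum_succ x hi, partialSum_succ y hi, h i hi.le] at this
  exact add_left_cancel this

end PartialSum

lemma Fin.val_le_of_strictMono {k n : ℕ} {f : Fin k → Fin n} (hf : StrictMono f) (j : Fin k) :
    (j : ℕ) ≤ f j := by
  obtain ⟨j, hj⟩ := j
  induction j with
  | zero => exact Nat.zero_le _
  | succ m ih =>
    have : f ⟨m, by omega⟩ < f ⟨m + 1, hj⟩ := hf (Fin.mk_lt_mk.mpr m.lt_succ_self)
    have := ih (by omega)
    simp only [Fin.lt_def] at *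
    omega

lemma sum_le_partialSum_of_antitone {n : ℕ} {x : Fin n → ℝ} (hx : Antitone x)
    (s : Finset (Fin n)) : ∑ i ∈ s, x i ≤ partialSum x s.card := by
  set e := s.orderEmbOfFin rfl
  have hs : s = univ.map e.toEmbedding := by simp [e]
  have hk : s.card ≤ n := by simpa using s.card_le_univ
  calc ∑ i ∈ s, x i = ∑ j, x (e j) := by nth_rewrite 1 [hs]; exact sum_map _ _ _
    _ ≤ ∑ j, x (Fin.castLE hk j) :=
      sum_le_sum fun j _ ↦ hx (Fin.le_def.mpr (Fin.val_le_of_strictMono e.strictMono j))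
    _ = partialSum x s.card := (partialSum_eq_sum_castLE x hk).symm

lemma kMaxSum_eq_partialSum {n : ℕ} {x : Fin n → ℝ} (hx : Antitone x) {k : ℕ} (hk : k ≤ n) :
    kMaxSum x k = partialSum x k := by
  refine IsGreatest.csSup_eq ⟨⟨univ.map (Fin.castLEEmb hk), by simp, ?_⟩, ?_⟩
  · simp [partialSum_eq_sum_castLE x hk]
  · rintro t ⟨s, rfl, rfl⟩
    exact sum_le_partialSum_of_antitone hx s

lemma kMaxSum_eq_zero_of_card_lt {ι : Type*} [Fintype ι] (x : ι → ℝ) {k : ℕ}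
    (hk : Fintype.card ι < k) : kMaxSum x k = 0 := by
  rw [kMaxSum, ← Real.sSup_empty]
  congr 1
  refine Set.eq_empty_of_forall_notMem ?_
  rintro t ⟨s, rfl, -⟩
  have := s.card_le_univ
  omega

lemma majorized_iff_partialSum_le {n : ℕ} {x y : Fin n → ℝ} (hx : Antitone x) (hy : Antitone y) :
    Majorized x y ↔ ∀ k ≤ n, partialSum x k ≤ partialSum y k := by
  refine ⟨fun h k hk ↦ ?_, fun h k ↦ ?_⟩
  · simpa only [kMaxSum_eq_partialSum hx hk, kMaxSum_eq_partialSum hy hk] using h k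
  · rcases le_or_gt k n with hk | hk
    · rw [kMaxSum_eq_partialSum hx hk, kMaxSum_eq_partialSum hy hk]
      exact h k hk
    · rw [kMaxSum_eq_zero_of_card_lt x (by simpa), kMaxSum_eq_zero_of_card_lt y (by simpa)]

lemma eq_of_majorized_of_majorized {n : ℕ} {x y : Fin n → ℝ} (hx : Antitone x) (hy : Antitone y)
    (hxy : Majorized x y) (hyx : Majorized y x) : x = y := by
  rw [majorized_iff_partialSum_le hx hy] at hxy
  rw [majorized_iff_partialSum_le hy hx] at hyx
  exact eq_of_partialSum_eq fun k hk ↦ (hxy k hk).antisymm (hyx k hk)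

def IsDiscreteConcave (n : ℕ) (g : ℕ → ℝ) : Prop :=
  ∀ j, j + 2 ≤ n → g (j + 2) + g j ≤ 2 * g (j + 1)

def concaveMajorants (f : ℕ → ℝ) (n : ℕ) : Set (ℕ → ℝ) :=
  {g | IsDiscreteConcave n g ∧ ∀ k ≤ n, f k ≤ g k}

noncomputable def leastConcaveMajorant (f : ℕ → ℝ) (n k : ℕ) : ℝ :=
  sInf ((fun g ↦ g k) '' concaveMajorants f n)

section ConcaveMajorant

variable {f : ℕ → ℝ} {n : ℕ}

lemma const_mem_concaveMajorants {M : ℝ} (hM : ∀ k ≤ n, f k ≤ M) :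
    (fun _ ↦ M) ∈ concaveMajorants f n :=
  ⟨fun _ _ ↦ by linarith, hM⟩

lemma concaveMajorants_nonempty (f : ℕ → ℝ) (n : ℕ) : (concaveMajorants f n).Nonempty :=
  ⟨_, const_mem_concaveMajorants fun k hk ↦ (le_abs_self (f k)).trans <|
    single_le_sum (f := fun k ↦ |f k|) (fun _ _ ↦ abs_nonneg _)
      (mem_range.mpr (Nat.lt_succ_of_le hk))⟩

lemma leastConcaveMajorant_le {g : ℕ → ℝ} (hg : g ∈ concaveMajorants f n) {k : ℕ} (hk : k ≤ n) :
    leastConcaveMajorant f n k ≤ g k :=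
  csInf_le ⟨f k, by rintro _ ⟨g, hg, rfl⟩; exact hg.2 k hk⟩ ⟨g, hg, rfl⟩

lemma le_leastConcaveMajorant_of_forall_le {k : ℕ} {t : ℝ}
    (h : ∀ g ∈ concaveMajorants f n, t ≤ g k) : t ≤ leastConcaveMajorant f n k :=
  le_csInf ((concaveMajorants_nonempty f n).image _) (by rintro _ ⟨g, hg, rfl⟩; exact h g hg)

lemma leastConcaveMajorant_mem (f : ℕ → ℝ) (n : ℕ) :
    leastConcaveMajorant f n ∈ concaveMajorants f n := by
  refine ⟨fun j hj ↦ ?_, fun k hk ↦ le_leastConcaveMajorant_of_forall_le fun g hg ↦ hg.2 k hk⟩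
  suffices (leastConcaveMajorant f n (j + 2) + leastConcaveMajorant f n j) / 2 ≤
      leastConcaveMajorant f n (j + 1) by linarith
  refine le_leastConcaveMajorant_of_forall_le fun g hg ↦ ?_
  linarith [hg.1 j hj, leastConcaveMajorant_le hg hj,
    leastConcaveMajorant_le hg (k := j) (by omega)]

lemma leastConcaveMajorant_zero (f : ℕ → ℝ) (n : ℕ) : leastConcaveMajorant f n 0 = f 0 := by
  set H := leastConcaveMajorant f n
  obtain ⟨hconc, hmaj⟩ := leastConcaveMajorant_mem f n
  refine le_antisymm ?_ (hmaj 0 n.zero_le)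
  -- lowering a concave majorant at an endpoint down to `f` keeps it a concave majorant
  have hmem : Function.update H 0 (f 0) ∈ concaveMajorants f n := by
    refine ⟨fun j hj ↦ ?_, fun k hk ↦ ?_⟩
    · rcases j with _ | j
      · simpa using (hconc 0 hj).trans' (by linarith [hmaj 0 n.zero_le])
      · simpa using hconc (j + 1) hj
    · rcases k with _ | k
      · simp
      · simpa using hmaj (k + 1) hk
  simpa using leastConcaveMajorant_le hmem n.zero_le

end ConcaveMajorant

def increments (n : ℕ) (H : ℕ → ℝ) : Fin n → ℝ := fun i ↦ H (i + 1) - H i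

section Increments

variable {n : ℕ} {H : ℕ → ℝ}

lemma partialSum_increments {k : ℕ} (hk : k ≤ n) : partialSum (increments n H) k = H k - H 0 := by
  rw [partialSum, ← sum_range_sub]
  exact sum_congr rfl fun j hj ↦ dif_pos ((mem_range.mp hj).trans_le hk)

lemma antitone_increments (hH : IsDiscreteConcave n H) : Antitone (increments n H) := by
  rintro ⟨i, hi⟩ ⟨j, hj⟩ hij
  simp only [increments, Fin.mk_le_mk] at hij ⊢
  induction j, hij using Nat.le_induction with
  | base => rfl
  | succ m _ ih => linarith [ih (by omega), hH m hj]

lemma increments_nonneg (hH : IsDiscreteConcave n H) (hlast : H (n - 1) ≤ H n) (i : Fin n) :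
    0 ≤ increments n H i := by
  have hi := i.2
  have hn : n - 1 + 1 = n := by omega
  have := antitone_increments hH (show i ≤ ⟨n - 1, by omega⟩ from Fin.le_def.mpr (by simp; omega))
  simp only [increments, hn] at this ⊢
  linarith

lemma isDiscreteConcave_partialSum {w : Fin n → ℝ} (hw : Antitone w) :
    IsDiscreteConcave n (partialSum w) := by
  intro j hj
  rw [partialSum_succ w (show j + 1 < n by omega), partialSum_succ w (show j < n by omega)]
  linarith [hw (Fin.mk_le_mk.mpr j.le_succ : (⟨j, by omega⟩ : Fin n) ≤ ⟨j + 1, by omega⟩)]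

lemma partialSum_mem_concaveMajorants_max {x y w : Fin n → ℝ} (hx : Antitone x) (hy : Antitone y)
    (hw : Antitone w) (hxw : Majorized x w) (hyw : Majorized y w) :
    partialSum w ∈ concaveMajorants (fun k ↦ max (partialSum x k) (partialSum y k)) n := by
  rw [majorized_iff_partialSum_le hx hw] at hxw
  rw [majorized_iff_partialSum_le hy hw] at hyw
  exact ⟨isDiscreteConcave_partialSum hw, fun k hk ↦ max_le (hxw k hk) (hyw k hk)⟩

end Increments

theorem unique_lub_majorization_const_sum_general {n : ℕ} (c : ℝ) (x y : Fin n → ℝ)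
    (hx0 : ∀ i, 0 ≤ x i) (hx1 : ∑ i, x i = c) (hxa : Antitone x)
    (hy0 : ∀ i, 0 ≤ y i) (hy1 : ∑ i, y i = c) (hya : Antitone y) :
    ∃! z : Fin n → ℝ,
      ((∀ i, 0 ≤ z i) ∧ (∑ i, z i = c) ∧ Antitone z) ∧
      Majorized x z ∧ Majorized y z ∧
      ∀ w : Fin n → ℝ, (∀ i, 0 ≤ w i) → (∑ i, w i = c) → Antitone w →
        Majorized x w → Majorized y w → Majorized z w := by
  set f : ℕ → ℝ := fun k ↦ max (partialSum x k) (partialSum y k)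
  set H := leastConcaveMajorant f n
  have hHc : ∀ k ≤ n, H k ≤ c := fun k hk ↦ leastConcaveMajorant_le (const_mem_concaveMajorants
    fun k hk ↦ max_le (hx1 ▸ partialSum_le_sum hx0 hk) (hy1 ▸ partialSum_le_sum hy0 hk)) hk
  have hHn : H n = c := (hHc n le_rfl).antisymm <| by
    simpa [f, partialSum_self, hx1, hy1] using (leastConcaveMajorant_mem f n).2 n le_rfl
  set z := increments n H
  have hza : Antitone z := antitone_increments (leastConcaveMajorant_mem f n).1
  have hSz : ∀ k ≤ n, partialSum z k = H k := fun k hk ↦ by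
    simp [z, H, partialSum_increments hk, leastConcaveMajorant_zero, f]
  have hub : ∀ v : Fin n → ℝ, Antitone v → (∀ k ≤ n, partialSum v k ≤ f k) → Majorized v z :=
    fun v hva hv ↦ (majorized_iff_partialSum_le hva hza).mpr fun k hk ↦
      (hv k hk).trans <| (hSz k hk).symm ▸ (leastConcaveMajorant_mem f n).2 k hk
  have hxz : Majorized x z := hub x hxa fun _ _ ↦ le_max_left _ _
  have hyz : Majorized y z := hub y hya fun _ _ ↦ le_max_right _ _
  have hz0 : ∀ i, 0 ≤ z i :=
    increments_nonneg (leastConcaveMajorant_mem f n).1 (hHn ▸ hHc _ (n.sub_le 1))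
  have hz1 : ∑ i, z i = c := by rw [← partialSum_self, hSz n le_rfl, hHn]
  have hleast : ∀ w : Fin n → ℝ, Antitone w → Majorized x w → Majorized y w → Majorized z w :=
    fun w hwa hxw hyw ↦ (majorized_iff_partialSum_le hza hwa).mpr fun k hk ↦ (hSz k hk).symm ▸
      leastConcaveMajorant_le (partialSum_mem_concaveMajorants_max hxa hya hwa hxw hyw) hk
  refine ⟨z, ⟨⟨hz0, hz1, hza⟩, hxz, hyz, fun w _ _ hwa ↦ hleast w hwa⟩, ?_⟩
  rintro z' ⟨⟨-, -, hz'a⟩, hxz', hyz', hz'least⟩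
  exact eq_of_majorized_of_majorized hz'a hza (hz'least z hz0 hz1 hza hxz hyz)
    (hleast z' hz'a hxz' hyz')

/-- Any two elements of `P^n_c` (nonnegative, non-increasingly ordered vectors summing
to a constant `c > 0`) have a unique least upper bound with respect to majorization. -/
theorem unique_lub_majorization_const_sum {n : ℕ} (c : ℝ) (hc : 0 < c) (x y : Fin n → ℝ)
    (hx0 : ∀ i, 0 ≤ x i) (hx1 : ∑ i, x i = c) (hxa : Antitone x)
    (hy0 : ∀ i, 0 ≤ y i) (hy1 : ∑ i, y i = c) (hya : Antitone y) :
    ∃! z : Fin n → ℝ,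
      ((∀ i, 0 ≤ z i) ∧ (∑ i, z i = c) ∧ Antitone z) ∧
      Majorized x z ∧ Majorized y z ∧
      ∀ w : Fin n → ℝ, (∀ i, 0 ≤ w i) → (∑ i, w i = c) → Antitone w →
        Majorized x w → Majorized y w → Majorized z w :=
  unique_lub_majorization_const_sum_general c x y hx0 hx1 hxa hy0 hy1 hya
end

section
/- The majorization order on the set P^n of n-dimensional probability vectors with non-increasing entries is a complete lattice: every nonempty subset S ⊆ P^n has a least upper bound in P^n, i.e., there exists z ∈ P^n such that x ≺ z for all x ∈ S, and z ≺ w for every w ∈ P^n satisfying x ≺ w for all x ∈ S. -/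
open scoped BigOperators

namespace MajAux

variable {n : ℕ}

/-- partial sum of the first `k` entries -/
noncomputable def psum (x : Fin n → ℝ) (k : ℕ) : ℝ :=
  ∑ i ∈ Finset.univ.filter (fun i : Fin n => (i : ℕ) < k), x i

lemma psum_nonneg (x : Fin n → ℝ) (hx : ∀ i, 0 ≤ x i) (k : ℕ) : 0 ≤ psum x k :=
  Finset.sum_nonneg fun i _ => hx i

lemma psum_zero (x : Fin n → ℝ) : psum x 0 = 0 := by simp [psum]

lemma psum_mono (x : Fin n → ℝ) (hx : ∀ i, 0 ≤ x i) : Monotone (psum x) := by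
  intro a b hab
  apply Finset.sum_le_sum_of_subset_of_nonneg
  · intro i hi
    simp only [Finset.mem_filter, Finset.mem_univ, true_and] at *
    omega
  · exact fun i _ _ => hx i

lemma psum_succ_lt (x : Fin n → ℝ) (k : ℕ) (h : k < n) :
    psum x (k + 1) = psum x k + x ⟨k, h⟩ := by
  unfold psum
  have : Finset.univ.filter (fun i : Fin n => (i : ℕ) < k + 1) =
      insert (⟨k, h⟩ : Fin n) (Finset.univ.filter (fun i : Fin n => (i : ℕ) < k)) := by
    ext i
    simp only [Finset.mem_filter, Finset.mem_univ, true_and, Finset.mem_insert, Fin.ext_iff]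
    omega
  rw [this, Finset.sum_insert (by simp)]
  ring

lemma psum_of_ge (x : Fin n → ℝ) {k : ℕ} (h : n ≤ k) : psum x k = ∑ i, x i := by
  unfold psum
  rw [Finset.filter_true_of_mem fun i _ => lt_of_lt_of_le i.isLt h]

lemma card_F {k : ℕ} (hk : k ≤ n) :
    (Finset.univ.filter (fun i : Fin n => (i : ℕ) < k)).card = k := by
  rw [show (Finset.univ.filter (fun i : Fin n => (i : ℕ) < k)) =
      Finset.map ⟨Fin.castLE hk, Fin.castLE_injective hk⟩ Finset.univ by
    ext i
    simp only [Finset.mem_filter, Finset.mem_univ, true_and, Finset.mem_map,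
      Function.Embedding.coeFn_mk]
    constructor
    · intro hi; exact ⟨⟨(i : ℕ), hi⟩, by ext; simp⟩
    · rintro ⟨j, -, rfl⟩; exact j.isLt]
  simp

lemma key_ineq (x : Fin n → ℝ) (hx : ∀ i, 0 ≤ x i) (ha : Antitone x) {k : ℕ} (hk : k ≤ n)
    (s : Finset (Fin n)) (hs : s.card = k) : ∑ i ∈ s, x i ≤ psum x k := by
  set F := Finset.univ.filter (fun i : Fin n => (i : ℕ) < k) with hF
  have hFc : F.card = k := card_F hk
  have h1 := Finset.card_inter_add_card_sdiff s F
  have h2 := Finset.card_inter_add_card_sdiff F s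
  rw [Finset.inter_comm] at h2
  have hcard : (s \ F).card = (F \ s).card := by omega
  have hsplit1 : ∑ i ∈ s, x i = ∑ i ∈ s ∩ F, x i + ∑ i ∈ s \ F, x i :=
    (Finset.sum_inter_add_sum_sdiff s F x).symm
  have hsplit2 : psum x k = ∑ i ∈ s ∩ F, x i + ∑ i ∈ F \ s, x i := by
    unfold psum
    rw [← hF, ← Finset.sum_inter_add_sum_sdiff F s x, Finset.inter_comm]
  have hmain : ∑ i ∈ s \ F, x i ≤ ∑ i ∈ F \ s, x i := by
    rcases (s \ F).eq_empty_or_nonempty with he | hne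
    · rw [he, Finset.sum_empty]
      exact Finset.sum_nonneg fun i _ => hx i
    · have hBne : (F \ s).Nonempty := by
        rw [← Finset.card_pos, ← hcard, Finset.card_pos]; exact hne
      obtain ⟨i0, hi0⟩ := hBne
      have hi0k : (i0 : ℕ) < k := by
        have := (Finset.mem_sdiff.mp hi0).1
        rw [hF] at this
        simpa using this
      have hk1 : k - 1 < n := by omega
      set c := x ⟨k - 1, hk1⟩ with hc
      have hA : ∀ j ∈ s \ F, x j ≤ c := by
        intro j hj
        have hjk : k ≤ (j : ℕ) := by
          have := (Finset.mem_sdiff.mp hj).2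
          rw [hF] at this
          simp only [Finset.mem_filter, Finset.mem_univ, true_and, not_lt] at this
          exact this
        exact ha (by simp only [Fin.le_def]; omega)
      have hB : ∀ i ∈ F \ s, c ≤ x i := by
        intro i hi
        have hik : (i : ℕ) < k := by
          have := (Finset.mem_sdiff.mp hi).1
          rw [hF] at this
          simpa using this
        exact ha (by simp only [Fin.le_def]; omega)
      calc ∑ j ∈ s \ F, x j ≤ (s \ F).card • c := Finset.sum_le_card_nsmul _ _ _ hA
        _ = (F \ s).card • c := by rw [hcard]
        _ ≤ ∑ i ∈ F \ s, x i := Finset.card_nsmul_le_sum _ _ _ hB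
  linarith

lemma kMaxSum_eq (x : Fin n → ℝ) (hx : ∀ i, 0 ≤ x i) (ha : Antitone x) {k : ℕ} (hk : k ≤ n) :
    kMaxSum x k = psum x k := by
  have hub : psum x k ∈ upperBounds {t : ℝ | ∃ s : Finset (Fin n), s.card = k ∧ t = ∑ i ∈ s, x i} := by
    rintro t ⟨s, hs, rfl⟩
    exact key_ineq x hx ha hk s hs
  have hmem : psum x k ∈ {t : ℝ | ∃ s : Finset (Fin n), s.card = k ∧ t = ∑ i ∈ s, x i} :=
    ⟨_, card_F hk, rfl⟩
  unfold kMaxSum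
  exact le_antisymm (csSup_le ⟨_, hmem⟩ fun t ht => hub ht) (le_csSup ⟨_, hub⟩ hmem)

lemma kMaxSum_of_gt (x : Fin n → ℝ) {k : ℕ} (hk : n < k) : kMaxSum x k = 0 := by
  unfold kMaxSum
  convert Real.sSup_empty using 2
  ext t
  simp only [Set.mem_setOf_eq, Set.mem_empty_iff_false, iff_false, not_exists]
  rintro s ⟨hs, -⟩
  have h1 : s.card ≤ n := by simpa using Finset.card_le_univ s
  omega

lemma maj_of_psum {x w : Fin n → ℝ} (hx : ∀ i, 0 ≤ x i) (hax : Antitone x)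
    (hw : ∀ i, 0 ≤ w i) (haw : Antitone w)
    (h : ∀ k ≤ n, psum x k ≤ psum w k) : Majorized x w := by
  intro k
  rcases le_or_gt k n with hk | hk
  · rw [kMaxSum_eq x hx hax hk, kMaxSum_eq w hw haw hk]; exact h k hk
  · rw [kMaxSum_of_gt x hk, kMaxSum_of_gt w hk]

lemma psum_of_maj {x w : Fin n → ℝ} (hx : ∀ i, 0 ≤ x i) (hax : Antitone x)
    (hw : ∀ i, 0 ≤ w i) (haw : Antitone w) (h : Majorized x w) {k : ℕ} (hk : k ≤ n) :
    psum x k ≤ psum w k := by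
  have := h k
  rwa [kMaxSum_eq x hx hax hk, kMaxSum_eq w hw haw hk] at this

lemma psum_concave (w : Fin n → ℝ) (hw : ∀ i, 0 ≤ w i) (ha : Antitone w) (k : ℕ) :
    psum w k + psum w (k + 2) ≤ 2 * psum w (k + 1) := by
  rcases lt_or_ge (k + 1) n with h1 | h1
  · have h0 : k < n := by omega
    rw [show k + 2 = (k + 1) + 1 from rfl, psum_succ_lt w (k + 1) h1, psum_succ_lt w k h0]
    have := ha (show (⟨k, h0⟩ : Fin n) ≤ ⟨k + 1, h1⟩ by simp [Fin.le_def])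
    linarith
  · rw [psum_of_ge w (show n ≤ k + 2 by omega)]
    have h2 : psum w k ≤ ∑ i, w i := by
      rw [← psum_of_ge w h1]
      exact psum_mono w hw (Nat.le_succ k)
    have h3 : psum w (k + 1) = ∑ i, w i := psum_of_ge w h1
    linarith

end MajAux


/-- Completeness of the majorization lattice: every nonempty subset of `P^n`
(non-increasingly ordered probability vectors) has a least upper bound in `P^n`. -/
theorem majorization_complete_lattice_lub {n : ℕ} (S : Set (Fin n → ℝ)) (hS : S.Nonempty)
    (hmem : ∀ x ∈ S, (∀ i, 0 ≤ x i) ∧ (∑ i, x i = 1) ∧ Antitone x) :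
    ∃ z : Fin n → ℝ,
      ((∀ i, 0 ≤ z i) ∧ (∑ i, z i = 1) ∧ Antitone z) ∧
      (∀ x ∈ S, Majorized x z) ∧
      ∀ w : Fin n → ℝ, (∀ i, 0 ≤ w i) → (∑ i, w i = 1) → Antitone w →
        (∀ x ∈ S, Majorized x w) → Majorized z w := by
  classical
  open MajAux in
  obtain ⟨x₀, hx₀⟩ := hS
  rcases Nat.eq_zero_or_pos n with hn | hn
  · exfalso
    have h1 := (hmem x₀ hx₀).2.1
    subst hn
    simp at h1
  -- the set of upper bounds in Pⁿ
  set U : Set (Fin n → ℝ) :=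
    {w | (∀ i, 0 ≤ w i) ∧ (∑ i, w i = 1) ∧ Antitone w ∧ ∀ x ∈ S, Majorized x w} with hU
  -- the extreme vector e = (1,0,…,0)
  set e : Fin n → ℝ := fun i => if (i : ℕ) = 0 then 1 else 0 with he
  have henn : ∀ i, 0 ≤ e i := by
    intro i; rw [he]; dsimp only; split <;> norm_num
  have hesum : ∑ i, e i = 1 := by
    rw [he]
    calc ∑ i : Fin n, (if (i : ℕ) = 0 then (1:ℝ) else 0)
        = ∑ i : Fin n, (if i = (⟨0, hn⟩ : Fin n) then (1:ℝ) else 0) :=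
          Finset.sum_congr rfl fun i _ => by simp [Fin.ext_iff]
      _ = 1 := by rw [Finset.sum_ite_eq']; simp
  have hea : Antitone e := by
    intro i j hij
    rw [he]
    dsimp only
    split_ifs with h1 h2 <;> try norm_num
    · exact absurd (show (i : ℕ) = 0 by have := (Fin.le_def.mp hij); omega) h2
  have heub : ∀ x ∈ S, Majorized x e := by
    intro x hx
    obtain ⟨hx1, hx2, hx3⟩ := hmem x hx
    apply maj_of_psum hx1 hx3 henn hea
    intro k hk
    cases k with
    | zero => rw [psum_zero, psum_zero]
    | succ k =>
      have h1 : psum x (k + 1) ≤ 1 := by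
        rw [← hx2]
        apply Finset.sum_le_sum_of_subset_of_nonneg (Finset.filter_subset _ _)
        exact fun i _ _ => hx1 i
      have h2 : (1 : ℝ) ≤ psum e (k + 1) := by
        have hmem0 : (⟨0, hn⟩ : Fin n) ∈
            Finset.univ.filter (fun i : Fin n => (i : ℕ) < k + 1) := by simp
        have h3 := Finset.single_le_sum (f := e) (fun i _ => henn i) hmem0
        have h4 : e ⟨0, hn⟩ = 1 := by simp [he]
        rw [h4] at h3
        exact h3
      linarith
  have heU : e ∈ U := ⟨henn, hesum, hea, heub⟩
  -- the infimum of partial sums of upper bounds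
  set T : ℕ → ℝ := fun k => sInf ((fun w => psum w k) '' U) with hT
  have hbdd : ∀ k, BddBelow ((fun w => psum w k) '' U) := by
    intro k
    refine ⟨0, ?_⟩
    rintro t ⟨w, hw, rfl⟩
    exact psum_nonneg w hw.1 k
  have hne : ∀ k, ((fun w => psum w k) '' U).Nonempty := fun k => ⟨_, e, heU, rfl⟩
  have hT_le : ∀ k, ∀ w ∈ U, T k ≤ psum w k := fun k w hw => csInf_le (hbdd k) ⟨w, hw, rfl⟩
  have hle_T : ∀ (k : ℕ) (c : ℝ), (∀ w ∈ U, c ≤ psum w k) → c ≤ T k := by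
    intro k c h
    apply le_csInf (hne k)
    rintro t ⟨w, hw, rfl⟩
    exact h w hw
  have hT0 : T 0 = 0 := by
    refine le_antisymm ?_ (hle_T 0 0 fun w hw => psum_nonneg w hw.1 0)
    have := hT_le 0 e heU
    rwa [psum_zero] at this
  have hTn : ∀ k, n ≤ k → T k = 1 := by
    intro k hk
    refine le_antisymm ?_ ?_
    · have := hT_le k e heU
      rwa [psum_of_ge e hk, hesum] at this
    · apply hle_T
      intro w hw
      rw [psum_of_ge w hk, hw.2.1]
  have hTmono : Monotone T := by
    apply monotone_nat_of_le_succ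
    intro k
    apply hle_T
    intro w hw
    exact (hT_le k w hw).trans (psum_mono w hw.1 (Nat.le_succ k))
  have hconc : ∀ k, T k + T (k + 2) ≤ 2 * T (k + 1) := by
    intro k
    have h2 : (T k + T (k + 2)) / 2 ≤ T (k + 1) := by
      apply hle_T
      intro w hw
      have hptw := psum_concave w hw.1 hw.2.2.1 k
      have ha := hT_le k w hw
      have hb := hT_le (k + 2) w hw
      linarith
    linarith
  -- the candidate lub
  set z : Fin n → ℝ := fun i => T ((i : ℕ) + 1) - T (i : ℕ) with hz
  have hznn : ∀ i, 0 ≤ z i := fun i => sub_nonneg.2 (hTmono (Nat.le_succ _))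
  have hd : Antitone (fun k : ℕ => T (k + 1) - T k) := by
    apply antitone_nat_of_succ_le
    intro k
    have := hconc k
    show T (k + 1 + 1) - T (k + 1) ≤ T (k + 1) - T k
    linarith
  have hza : Antitone z := fun i j hij => hd (show (i : ℕ) ≤ (j : ℕ) from hij)
  have hpz : ∀ k, k ≤ n → psum z k = T k := by
    intro k
    induction k with
    | zero => intro _; rw [psum_zero, hT0]
    | succ k ih =>
      intro hk
      have hkn : k < n := by omega
      rw [psum_succ_lt z k hkn, ih (by omega)]
      show T k + (T (k + 1) - T k) = T (k + 1)
      ring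
  have hzsum : ∑ i, z i = 1 := by
    rw [← psum_of_ge z (le_refl n), hpz n le_rfl, hTn n le_rfl]
  refine ⟨z, ⟨hznn, hzsum, hza⟩, ?_, ?_⟩
  · intro x hx
    obtain ⟨hx1, hx2, hx3⟩ := hmem x hx
    apply maj_of_psum hx1 hx3 hznn hza
    intro k hk
    rw [hpz k hk]
    apply hle_T
    intro w hw
    exact psum_of_maj hx1 hx3 hw.1 hw.2.2.1 (hw.2.2.2 x hx) hk
  · intro w hw1 hw2 hw3 hw4
    apply maj_of_psum hznn hza hw1 hw3
    intro k hk
    rw [hpz k hk]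
    exact hT_le k w ⟨hw1, hw2, hw3, hw4⟩
end

section
/- Direct-sum majorization uncertainty relation (DSMUR): Let {M_a}_{a=1}^n and {N_b}_{b=1}^m be POVMs on C^d, let ρ be a density matrix, let λ ∈ [0,1], and set p_a = Tr(M_a ρ), q_b = Tr(N_b ρ). For each k = 1,…,n+m define S_k(λ) = max over subsets I ⊆ {1,…,n}, J ⊆ {1,…,m} with |I| + |J| = k of λ₁( λ Σ_{a∈I} M_a + (1−λ) Σ_{b∈J} N_b ). Then for every k, the sum of the k largest entries of the (n+m)-dimensional vector λp ⊕ (1−λ)q = (λp_1,…,λp_n,(1−λ)q_1,…,(1−λ)q_m) is at most S_k(λ); equivalently, λp ⊕ (1−λ)q ≺ s(λ) where s(λ) = (S_1(λ), S_2(λ)−S_1(λ), …, S_{n+m}(λ)−S_{n+m−1}(λ)). -/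
open scoped BigOperators ComplexOrder

/-- The largest eigenvalue `λ₁(A)` of a (Hermitian) matrix `A`: the supremum of the real
points of its spectrum. -/
noncomputable def maxEig {d : ℕ} (A : Matrix (Fin d) (Fin d) ℂ) : ℝ :=
  sSup {t : ℝ | (t : ℂ) ∈ spectrum ℂ A}

/-- `S_k(l)`: the maximum over index sets `I`, `J` with `|I| + |J| = k` of the largest
eigenvalue of `l Σ_{a∈I} M_a + (1−l) Σ_{b∈J} N_b`. -/
noncomputable def Sval {d n m : ℕ} (M : Fin n → Matrix (Fin d) (Fin d) ℂ)
    (N : Fin m → Matrix (Fin d) (Fin d) ℂ) (l : ℝ) (k : ℕ) : ℝ :=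
  sSup {t : ℝ | ∃ (I : Finset (Fin n)) (J : Finset (Fin m)), I.card + J.card = k ∧
    t = maxEig ((l : ℂ) • (∑ a ∈ I, M a) + ((1 - l : ℝ) : ℂ) • (∑ b ∈ J, N b))}

/-! For index sets `I`, `J` with `|I| + |J| = k`, the corresponding entries of `λp ⊕ (1−λ)q` sum
to `Re Tr(Aρ)` with `A = λ Σ_{a∈I} M_a + (1−λ) Σ_{b∈J} N_b`, and `Tr(Aρ) ≤ λ₁(A)` because both
`λ₁(A) • 1 − A` and `ρ` are positive semidefinite and `Tr ρ = 1`. -/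

open scoped Matrix MatrixOrder

namespace Matrix

variable {n 𝕜 : Type*} [Fintype n] [RCLike 𝕜]

theorem PosSemidef.trace_mul_nonneg {A B : Matrix n n 𝕜} (hA : A.PosSemidef)
    (hB : B.PosSemidef) : 0 ≤ (A * B).trace := by
  classical
  obtain ⟨X, rfl⟩ := CStarAlgebra.nonneg_iff_eq_star_mul_self.mp hB.nonneg
  rw [star_eq_conjTranspose, ← mul_assoc, trace_mul_comm, ← mul_assoc]
  exact (hA.mul_mul_conjTranspose_same X).trace_nonneg

theorem IsHermitian.trace_mul_le_of_spectrum_le [DecidableEq n] {A ρ : Matrix n n 𝕜}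
    (hA : A.IsHermitian) (hρ : ρ.PosSemidef) {c : ℝ} (hc : ∀ x ∈ spectrum ℝ A, x ≤ c) :
    (A * ρ).trace ≤ c * ρ.trace := by
  have hgap : (algebraMap ℝ (Matrix n n 𝕜) c - A).PosSemidef :=
    le_iff.mp (le_algebraMap_of_spectrum_le hc hA)
  have h := hgap.trace_mul_nonneg hρ
  rwa [sub_mul, trace_sub, sub_nonneg, Algebra.algebraMap_eq_smul_one, smul_mul, one_mul,
    trace_smul, RCLike.real_smul_eq_coe_mul] at h

end Matrix

theorem Matrix.IsHermitian.ofReal_smul_add_ofReal_smul {n : Type*} {A B : Matrix n n ℂ}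
    (hA : A.IsHermitian) (hB : B.IsHermitian) (r s : ℝ) :
    ((r : ℂ) • A + (s : ℂ) • B).IsHermitian := by
  have hreal : ∀ t : ℝ, IsSelfAdjoint (t : ℂ) := Complex.conj_ofReal
  exact ((hreal r).smul hA).add ((hreal s).smul hB)

theorem re_trace_smul_sum_add_smul_sum_mul {d n m : ℕ} (M : Fin n → Matrix (Fin d) (Fin d) ℂ)
    (N : Fin m → Matrix (Fin d) (Fin d) ℂ) (l : ℝ) (ρ : Matrix (Fin d) (Fin d) ℂ)
    (I : Finset (Fin n)) (J : Finset (Fin m)) :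
    ((((l : ℂ) • (∑ a ∈ I, M a) + ((1 - l : ℝ) : ℂ) • (∑ b ∈ J, N b)) * ρ).trace).re =
      ∑ a ∈ I, l * ((M a * ρ).trace).re + ∑ b ∈ J, (1 - l) * ((N b * ρ).trace).re := by
  simp [add_mul, Finset.sum_mul, Matrix.trace_sum, Complex.re_sum, Finset.mul_sum]

theorem maxEig_eq_sSup_spectrum_real {d : ℕ} (A : Matrix (Fin d) (Fin d) ℂ) :
    maxEig A = sSup (spectrum ℝ A) :=
  congrArg sSup (Set.ext fun t => spectrum.algebraMap_mem_iff ℂ (r := t))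

theorem Matrix.IsHermitian.re_trace_mul_le_maxEig {d : ℕ} {A ρ : Matrix (Fin d) (Fin d) ℂ}
    (hA : A.IsHermitian) (hρ : ρ.PosSemidef) (hρ1 : ρ.trace = 1) :
    ((A * ρ).trace).re ≤ maxEig A := by
  have hbdd : BddAbove (spectrum ℝ A) := by
    rw [hA.spectrum_real_eq_range_eigenvalues]
    exact (Set.finite_range _).bddAbove
  have h := hA.trace_mul_le_of_spectrum_le hρ (c := maxEig A) fun x hx =>
    maxEig_eq_sSup_spectrum_real A ▸ le_csSup hbdd hx
  simpa [hρ1] using Complex.re_le_re h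

theorem kMaxSum_le {ι : Type*} [Fintype ι] {x : ι → ℝ} {k : ℕ} (hk : k ≤ Fintype.card ι)
    {c : ℝ} (h : ∀ s : Finset ι, s.card = k → ∑ i ∈ s, x i ≤ c) : kMaxSum x k ≤ c := by
  obtain ⟨s, -, hs⟩ := Finset.exists_subset_card_eq (s := Finset.univ) (by simpa using hk)
  refine csSup_le ⟨_, s, hs, rfl⟩ ?_
  rintro t ⟨s, hs, rfl⟩
  exact h s hs

theorem maxEig_le_Sval {d n m : ℕ} (M : Fin n → Matrix (Fin d) (Fin d) ℂ)
    (N : Fin m → Matrix (Fin d) (Fin d) ℂ) (l : ℝ) {I : Finset (Fin n)} {J : Finset (Fin m)} :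
    maxEig ((l : ℂ) • (∑ a ∈ I, M a) + ((1 - l : ℝ) : ℂ) • (∑ b ∈ J, N b))
      ≤ Sval M N l (I.card + J.card) := by
  refine le_csSup (Set.Finite.bddAbove ?_) ⟨I, J, rfl, rfl⟩
  refine (Set.finite_range fun p : Finset (Fin n) × Finset (Fin m) =>
    maxEig ((l : ℂ) • (∑ a ∈ p.1, M a) + ((1 - l : ℝ) : ℂ) • (∑ b ∈ p.2, N b))).subset ?_
  rintro t ⟨I', J', -, rfl⟩
  exact ⟨(I', J'), rfl⟩

theorem Finset.sum_fin_append {β : Type*} [AddCommMonoid β] {n m : ℕ}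
    (s : Finset (Fin (n + m))) (f : Fin n → β) (g : Fin m → β) :
    ∑ i ∈ s, Fin.append f g i =
      ∑ a ∈ (s.map finSumFinEquiv.symm.toEmbedding).toLeft, f a +
        ∑ b ∈ (s.map finSumFinEquiv.symm.toEmbedding).toRight, g b := by
  have h := Finset.sum_disjSum (s.map finSumFinEquiv.symm.toEmbedding).toLeft
    (s.map finSumFinEquiv.symm.toEmbedding).toRight (Sum.elim f g)
  simp only [Finset.toLeft_disjSum_toRight, Finset.sum_map, Sum.elim_inl, Sum.elim_inr] at h
  rw [← h]
  refine Finset.sum_congr rfl fun i _ => ?_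
  obtain ⟨j, rfl⟩ := finSumFinEquiv.surjective i
  cases j <;> simp

theorem dsmur_general {d n m : ℕ}
    (M : Fin n → Matrix (Fin d) (Fin d) ℂ)
    (hMpos : ∀ a, (M a).PosSemidef)
    (N : Fin m → Matrix (Fin d) (Fin d) ℂ)
    (hNpos : ∀ b, (N b).PosSemidef)
    (l : ℝ)
    (ρ : Matrix (Fin d) (Fin d) ℂ) (hρ : ρ.PosSemidef) (hρ1 : ρ.trace = 1) :
    ∀ k ≤ n + m,
      kMaxSum (Fin.append (fun a => l * ((M a * ρ).trace).re)
          (fun b => (1 - l) * ((N b * ρ).trace).re)) k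
        ≤ Sval M N l k := by
  intro k hk
  refine kMaxSum_le (by simpa using hk) fun s hs => ?_
  set u := s.map finSumFinEquiv.symm.toEmbedding
  have hcard : u.toLeft.card + u.toRight.card = k := by
    rw [Finset.card_toLeft_add_card_toRight, Finset.card_map, hs]
  have hA := Matrix.IsHermitian.ofReal_smul_add_ofReal_smul
    (isSelfAdjoint_sum u.toLeft fun a _ => (hMpos a).1)
    (isSelfAdjoint_sum u.toRight fun b _ => (hNpos b).1) l (1 - l)
  calc _ = _ := Finset.sum_fin_append s _ _
    _ = _ := (re_trace_smul_sum_add_smul_sum_mul M N l ρ u.toLeft u.toRight).symm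
    _ ≤ _ := hA.re_trace_mul_le_maxEig hρ hρ1
    _ ≤ _ := hcard ▸ maxEig_le_Sval M N l

/-- Direct-sum majorization uncertainty relation (DSMUR): for every `k = 1, …, n + m`,
the sum of the `k` largest entries of `λp ⊕ (1−λ)q` is at most `S_k(λ)`;
i.e. `λp ⊕ (1−λ)q ≺ s(λ)`. -/
theorem dsmur {d n m : ℕ}
    (M : Fin n → Matrix (Fin d) (Fin d) ℂ)
    (hMpos : ∀ a, (M a).PosSemidef) (hMsum : ∑ a, M a = 1)
    (N : Fin m → Matrix (Fin d) (Fin d) ℂ)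
    (hNpos : ∀ b, (N b).PosSemidef) (hNsum : ∑ b, N b = 1)
    (l : ℝ) (hl : l ∈ Set.Icc (0 : ℝ) 1)
    (ρ : Matrix (Fin d) (Fin d) ℂ) (hρ : ρ.PosSemidef) (hρ1 : ρ.trace = 1) :
    ∀ k ≤ n + m,
      kMaxSum (Fin.append (fun a => l * ((M a * ρ).trace).re)
          (fun b => (1 - l) * ((N b * ρ).trace).re)) k
        ≤ Sval M N l k :=
  dsmur_general M hMpos N hNpos l ρ hρ hρ1
end
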